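/- arXiv:1306.6452 — 2 statements merged into one kernel-verified Lean document; each statement's English description precedes it below -/
import Mathlib

section
/- Let Z_0, Z_1, ..., Z_N be elements of an associative algebra with [Z_k, Z_0] = -∑_{0 ≤ l < k-1} c_{0kl} Z_l. Then for any product Z_{k,n} = Z_{k_1}···Z_{k_n}, the commutator [Z_{k,n}, Z_0²] can be written as ∑_{k'} η_{k,k'} Z_0 Z_{k',n} + ∑_{k'} ζ_{k,k'} Z_{k',n} for some real coefficients η, ζ, where the sums range over multi-indices k' with |k'|_n < |k|_n - 1, and |k|_n := k_1 + ... + k_n. -/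
/-!
Write `P = Z_{k,n}` and `C = [P, Z_0]`. Then `[P, Z_0²] = 2 Z_0 C + [C, Z_0]`. Since `X ↦ [X, Z_0]`
is a derivation and each `[Z_a, Z_0]` only involves `Z_l` with `l + 2 ≤ a`, induction on `n` shows
that `C` is a combination of products `Z_{k',n}` with `|k'|ₙ + 2 ≤ |k|ₙ`; the span of these
products is stable under `[·, Z_0]`, so the same holds for `[C, Z_0]`.
-/

open Finset

section OrderedProducts

variable {R A : Type*} [CommRing R] [Ring A] [Algebra R A] (Z : ℕ → A) {N n : ℕ}

theorem commutator_mul_self_eq (x z : A) :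
    x * (z * z) - (z * z) * x
      = 2 • (z * (x * z - z * x)) + ((x * z - z * x) * z - z * (x * z - z * x)) := by
  noncomm_ring

def orderedProd (k : Fin n → ℕ) : A :=
  (List.ofFn fun j => Z (k j)).prod

theorem orderedProd_cons (a : ℕ) (k : Fin n → ℕ) :
    orderedProd Z (Fin.cons a k : Fin (n + 1) → ℕ) = Z a * orderedProd Z k := by
  simp [orderedProd, List.ofFn_succ]

variable (R N n) in
def lowerSpan (m : ℕ) : Submodule R A :=
  Submodule.span R ((fun k' : Fin n → Fin (N + 1) => orderedProd Z fun j => (k' j : ℕ)) ''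
    {k' | ∑ j, (k' j : ℕ) + 2 ≤ m})

theorem lowerSpan_mono {m m' : ℕ} (h : m ≤ m') : lowerSpan R Z N n m ≤ lowerSpan R Z N n m' :=
  Submodule.span_mono <| Set.image_mono fun _ hk' => le_trans hk' h

theorem orderedProd_mem_lowerSpan {k : Fin n → ℕ} (hk : ∀ j, k j ≤ N) {m : ℕ}
    (hm : ∑ j, k j + 2 ≤ m) : orderedProd Z k ∈ lowerSpan R Z N n m :=
  Submodule.subset_span ⟨fun j => ⟨k j, Nat.lt_succ_of_le (hk j)⟩, hm, rfl⟩

theorem mul_mem_lowerSpan_succ {a : ℕ} (ha : a ≤ N) {m : ℕ} {x : A}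
    (hx : x ∈ lowerSpan R Z N n m) : Z a * x ∈ lowerSpan R Z N (n + 1) (a + m) := by
  induction hx using Submodule.span_induction with
  | mem x hx =>
    obtain ⟨k', hk', rfl⟩ := hx
    rw [← orderedProd_cons]
    refine orderedProd_mem_lowerSpan Z (fun j => ?_) ?_
    · cases j using Fin.cases <;> simp [ha, Nat.lt_succ_iff.mp (k' _).isLt]
    · simp only [Fin.sum_cons]
      simp only [Set.mem_ofPred_eq] at hk'
      omega
  | zero => simp
  | add x y _ _ hx hy => rw [mul_add]; exact add_mem hx hy
  | smul r x _ hx => rw [mul_smul_comm]; exact Submodule.smul_mem _ r hx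

variable {c : ℕ → ℕ → R} (hc : ∀ k, Z k * Z 0 - Z 0 * Z k = -∑ l ∈ range (k - 1), c k l • Z l)
include hc

theorem orderedProd_commutator_mem_lowerSpan (k : Fin n → ℕ) (hk : ∀ j, k j ≤ N) :
    orderedProd Z k * Z 0 - Z 0 * orderedProd Z k ∈ lowerSpan R Z N n (∑ j, k j) := by
  induction k using Fin.consInduction with
  | elim0 => simp [orderedProd]
  | cons a k ih =>
    have ha : a ≤ N := by simpa using hk 0
    have hk' : ∀ j, k j ≤ N := fun j => by simpa using hk j.succ
    rw [orderedProd_cons, Fin.sum_cons]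
    have hsplit : Z a * orderedProd Z k * Z 0 - Z 0 * (Z a * orderedProd Z k)
        = Z a * (orderedProd Z k * Z 0 - Z 0 * orderedProd Z k)
          + (Z a * Z 0 - Z 0 * Z a) * orderedProd Z k := by
      noncomm_ring
    rw [hsplit, hc, neg_mul, Finset.sum_mul]
    refine add_mem (mul_mem_lowerSpan_succ Z ha (ih hk')) (neg_mem (sum_mem fun l hl => ?_))
    rw [mem_range] at hl
    rw [smul_mul_assoc]
    refine Submodule.smul_mem _ _ (lowerSpan_mono Z ?_ (mul_mem_lowerSpan_succ Z (m := ∑ j, k j + 2)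
      (by omega) (orderedProd_mem_lowerSpan Z hk' le_rfl)))
    omega

theorem commutator_mem_lowerSpan_of_mem {m : ℕ} {x : A} (hx : x ∈ lowerSpan R Z N n m) :
    x * Z 0 - Z 0 * x ∈ lowerSpan R Z N n m := by
  induction hx using Submodule.span_induction with
  | mem x hx =>
    obtain ⟨k', hk', rfl⟩ := hx
    exact lowerSpan_mono Z (by simp only [Set.mem_ofPred_eq] at hk'; omega)
      (orderedProd_commutator_mem_lowerSpan Z hc _ fun j => Nat.lt_succ_iff.mp (k' j).isLt)
  | zero => simp
  | add x y _ _ hx hy => convert add_mem hx hy using 1; noncomm_ring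
  | smul r x _ hx => convert Submodule.smul_mem _ r hx using 1; simp [smul_sub]

omit hc in
theorem exists_sum_eq_of_mem_lowerSpan {m : ℕ} {x : A} (hx : x ∈ lowerSpan R Z N n m) :
    ∃ f : (Fin n → ℕ) → R, (∀ k', f k' ≠ 0 → ∑ j, k' j + 2 ≤ m) ∧
      x = ∑ k' : Fin n → Fin (N + 1), f (fun j => k' j) • orderedProd Z fun j => (k' j : ℕ) := by
  obtain ⟨l, hl, rfl⟩ := (Finsupp.mem_span_image_iff_linearCombination R).mp hx
  have hinj : Function.Injective fun (k' : Fin n → Fin (N + 1)) j => (k' j : ℕ) :=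
    Fin.val_injective.comp_left
  refine ⟨Function.extend (fun k' j => (k' j : ℕ)) l 0, fun k' hk' => ?_, ?_⟩
  · by_cases h : ∃ a : Fin n → Fin (N + 1), (fun j => (a j : ℕ)) = k'
    · obtain ⟨a, rfl⟩ := h
      rw [hinj.extend_apply] at hk'
      exact hl (Finsupp.mem_support_iff.mpr hk')
    · exact absurd (Function.extend_apply' _ _ _ h) hk'
  · simp [Finsupp.linearCombination_apply, Finsupp.sum_fintype, hinj.extend_apply]

end OrderedProducts

open Finset in
/-- If `[Z_k, Z_0] = -∑_{0 ≤ l < k-1} c_{0kl} Z_l`, then for any product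
`Z_{k,n} = Z_{k_1} ⋯ Z_{k_n}` (indices in `{0,…,N}`), the commutator `[Z_{k,n}, Z_0²]`
equals `∑_{k'} η_{k,k'} Z_0 Z_{k',n} + ∑_{k'} ζ_{k,k'} Z_{k',n}`, with coefficients
supported on multi-indices `k'` with `|k'|ₙ < |k|ₙ - 1`. -/
theorem commutator_prod_with_Z0_sq {A : Type*} [Ring A] [Algebra ℝ A]
    (N n : ℕ) (Z : ℕ → A) (c : ℕ → ℕ → ℝ)
    (hc : ∀ k, Z k * Z 0 - Z 0 * Z k = -∑ l ∈ range (k - 1), c k l • Z l)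
    (k : Fin n → ℕ) (hk : ∀ j, k j ≤ N) :
    ∃ η ζ : (Fin n → ℕ) → ℝ,
      (∀ k' : Fin n → ℕ, (η k' ≠ 0 ∨ ζ k' ≠ 0) → (∑ j, k' j) + 1 < ∑ j, k j) ∧
      (List.ofFn fun j => Z (k j)).prod * (Z 0 * Z 0)
          - (Z 0 * Z 0) * (List.ofFn fun j => Z (k j)).prod
        = (∑ k' : Fin n → Fin (N + 1),
            η (fun j => (k' j : ℕ)) • (Z 0 * (List.ofFn fun j => Z (k' j : ℕ)).prod))
          + ∑ k' : Fin n → Fin (N + 1),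
            ζ (fun j => (k' j : ℕ)) • (List.ofFn fun j => Z (k' j : ℕ)).prod := by
  have hC := orderedProd_commutator_mem_lowerSpan Z hc k hk
  obtain ⟨a, ha, hCa⟩ := exists_sum_eq_of_mem_lowerSpan Z hC
  obtain ⟨b, hb, hDb⟩ := exists_sum_eq_of_mem_lowerSpan Z (commutator_mem_lowerSpan_of_mem Z hc hC)
  refine ⟨2 • a, b, fun k' hk' => ?_, ?_⟩
  · rcases hk' with h | h
    · have := ha k' fun h0 => h (by simp [h0])
      omega
    · have := hb k' h
      omega
  · change orderedProd Z k * _ - _ * orderedProd Z k = _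
    rw [commutator_mul_self_eq, hDb, hCa, Finset.mul_sum, Finset.smul_sum]
    congr 1
    refine sum_congr rfl fun k' _ => ?_
    rw [mul_smul_comm, Pi.smul_apply, smul_assoc]
    rfl
end

section
/- Suppose F: [0,∞) → [0,∞) is continuous and satisfies F_t ≤ A + e^{-C₂ t} F_0 + C₄ ∫_0^t e^{-C₂(t-s)} F_s ds for all t ≥ 0, where A ≥ 0, C₂ > 0, and 0 < C₄ < C₂. Then sup_{t ≥ 0} F_t ≤ (1 - C₄/C₂)^{-1} (A + F_0). -/
/-!
Fix `t ≥ 0` and let `u` be a point where `F` attains its maximum `M` on `[0, t]`. The kernel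
`s ↦ e^{-C₂ (u - s)}` has mass at most `1 / C₂` on `[0, u]`, so the hypothesis at `u` gives
`M ≤ A + F 0 + (C₄ / C₂) M`, and `C₄ / C₂ < 1` lets us solve for `M`.
-/

open Real Set

theorem integral_exp_neg_mul_sub {c : ℝ} (hc : c ≠ 0) (u : ℝ) :
    ∫ s in (0 : ℝ)..u, exp (-c * (u - s)) = (1 - exp (-c * u)) / c := by
  have h := intervalIntegral.integral_comp_mul_add (fun x => exp x) hc (-c * u) (a := 0) (b := u)
  simp only [mul_zero, zero_add, integral_exp] at h
  rw [show (fun s => exp (-c * (u - s))) = fun s => exp (c * s + -c * u) from by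
    funext s; ring_nf, h, show c * u + -c * u = 0 by ring, exp_zero, smul_eq_mul]
  field_simp

theorem integral_exp_neg_mul_sub_mul_le {f : ℝ → ℝ} {c u M : ℝ} (hc : 0 < c) (hu : 0 ≤ u)
    (hM : 0 ≤ M) (hf : IntervalIntegrable f MeasureTheory.volume 0 u)
    (hfM : ∀ s ∈ Icc 0 u, f s ≤ M) :
    ∫ s in (0 : ℝ)..u, exp (-c * (u - s)) * f s ≤ M / c := by
  have hexp : Continuous fun s => exp (-c * (u - s)) := by fun_prop
  calc ∫ s in (0 : ℝ)..u, exp (-c * (u - s)) * f s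
      ≤ ∫ s in (0 : ℝ)..u, exp (-c * (u - s)) * M :=
        intervalIntegral.integral_mono_on hu (hf.continuousOn_mul hexp.continuousOn)
          (hexp.intervalIntegrable _ _ |>.mul_const M) fun s hs =>
            mul_le_mul_of_nonneg_left (hfM s hs) (exp_pos _).le
    _ = (1 - exp (-c * u)) / c * M := by
        rw [intervalIntegral.integral_mul_const, integral_exp_neg_mul_sub hc.ne']
    _ ≤ M / c := by
        rw [div_mul_eq_mul_div]
        gcongr
        nlinarith [exp_pos (-c * u)]

theorem le_inv_one_sub_mul_of_le_add_mul {K : Type*} [Field K] [LinearOrder K] [IsStrictOrderedRing K]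
    {x b k : K} (hk : k < 1) (h : x ≤ b + k * x) : x ≤ (1 - k)⁻¹ * b := by
  rw [inv_mul_eq_div, le_div_iff₀ (sub_pos.mpr hk)]
  linarith

theorem gronwall_uniform_bound_general (F : ℝ → ℝ) (A C2 C4 : ℝ)
    (hFcont : ContinuousOn F (Set.Ici 0))
    (hFnn : ∀ t, 0 ≤ t → 0 ≤ F t)
    (hC2 : 0 < C2) (hC4 : 0 < C4) (hC42 : C4 < C2)
    (hineq : ∀ t, 0 ≤ t →
      F t ≤ A + Real.exp (-C2 * t) * F 0
            + C4 * ∫ s in (0 : ℝ)..t, Real.exp (-C2 * (t - s)) * F s) :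
    ∀ t, 0 ≤ t → F t ≤ (1 - C4 / C2)⁻¹ * (A + F 0) := by
  intro t ht
  obtain ⟨u, ⟨hu0, hut⟩, hmax⟩ := isCompact_Icc.exists_isMaxOn ⟨0, left_mem_Icc.mpr ht⟩
    (hFcont.mono Icc_subset_Ici_self)
  have hF0 : 0 ≤ F 0 := hFnn 0 le_rfl
  have hFu : F u ≤ A + F 0 + C4 / C2 * F u := by
    have hint : IntervalIntegrable F MeasureTheory.volume 0 u :=
      (hFcont.mono (uIcc_of_le hu0 ▸ Icc_subset_Ici_self)).intervalIntegrable
    have hbound := integral_exp_neg_mul_sub_mul_le hC2 hu0 (hF0.trans (hmax ⟨le_rfl, ht⟩)) hint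
      fun s hs => hmax ⟨hs.1, hs.2.trans hut⟩
    calc F u ≤ A + exp (-C2 * u) * F 0 + C4 * ∫ s in (0 : ℝ)..u, exp (-C2 * (u - s)) * F s :=
          hineq u hu0
      _ ≤ A + 1 * F 0 + C4 * (F u / C2) := by
          gcongr
          exact exp_le_one_iff.mpr (by nlinarith)
      _ = A + F 0 + C4 / C2 * F u := by ring
  exact (hmax ⟨ht, le_rfl⟩).trans
    (le_inv_one_sub_mul_of_le_add_mul ((div_lt_one hC2).mpr hC42) hFu)

/-- Gronwall-type uniform bound: if a continuous nonnegative `F` satisfies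
`F t ≤ A + e^{-C₂ t} F 0 + C₄ ∫₀ᵗ e^{-C₂ (t-s)} F s ds` with `0 < C₄ < C₂`, then
`sup_{t ≥ 0} F t ≤ (1 - C₄/C₂)⁻¹ (A + F 0)`. -/
theorem gronwall_uniform_bound (F : ℝ → ℝ) (A C2 C4 : ℝ)
    (hFcont : ContinuousOn F (Set.Ici 0))
    (hFnn : ∀ t, 0 ≤ t → 0 ≤ F t)
    (hA : 0 ≤ A) (hC2 : 0 < C2) (hC4 : 0 < C4) (hC42 : C4 < C2)
    (hineq : ∀ t, 0 ≤ t →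
      F t ≤ A + Real.exp (-C2 * t) * F 0
            + C4 * ∫ s in (0 : ℝ)..t, Real.exp (-C2 * (t - s)) * F s) :
    ∀ t, 0 ≤ t → F t ≤ (1 - C4 / C2)⁻¹ * (A + F 0) :=
  gronwall_uniform_bound_general F A C2 C4 hFcont hFnn hC2 hC4 hC42 hineq
end
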